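/- arXiv:1707.08017 — 3 statements merged into one kernel-verified Lean document; each statement's English description precedes it below -/
import Mathlib

section
/- A consequence relation ⊢ on a set L is monotonic if and only if it has a sound and complete intersective mixed semantics. -/
universe u v w x

/-- Mixed truth-relation. -/
def Mixed {V : Type*} (Dp Dc : Set V) (γ δ : Set V) : Prop :=
  γ ⊆ Dp → (δ ∩ Dc).Nonempty

def Monotonic {L : Type*} (Cons : Set L → Set L → Prop) : Prop :=
  ∀ ⦃Γ₁ Γ₂ Δ₁ Δ₂ : Set L⦄, Γ₁ ⊆ Γ₂ → Δ₁ ⊆ Δ₂ → Cons Γ₁ Δ₁ → Cons Γ₂ Δ₂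

def ReflRel {L : Type*} (Cons : Set L → Set L → Prop) : Prop :=
  ∀ F : L, Cons {F} {F}

def TransRel {L : Type*} (Cons : Set L → Set L → Prop) : Prop :=
  ∀ Γ Δ : Set L, ¬ Cons Γ Δ →
    ∃ Γ' Δ' : Set L, Γ ⊆ Γ' ∧ Δ ⊆ Δ' ∧ ¬ Cons Γ' Δ' ∧ Γ' ∪ Δ' = Set.univ

def LRPermeable {L : Type*} (Cons : Set L → Set L → Prop) : Prop :=
  ∀ Γ Δ S : Set L, Cons (Γ ∪ S) Δ → Cons Γ (S ∪ Δ)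

def RLPermeable {L : Type*} (Cons : Set L → Set L → Prop) : Prop :=
  ∀ Γ Δ S : Set L, Cons Γ (S ∪ Δ) → Cons (Γ ∪ S) Δ

def Permeable {L : Type*} (Cons : Set L → Set L → Prop) : Prop :=
  LRPermeable Cons ∨ RLPermeable Cons

def CompactRel {L : Type*} (Cons : Set L → Set L → Prop) : Prop :=
  ∀ Γ Δ : Set L, Cons Γ Δ →
    ∃ Γ' Δ' : Set L, Γ' ⊆ Γ ∧ Δ' ⊆ Δ ∧ Γ'.Finite ∧ Δ'.Finite ∧ Cons Γ' Δ'

/-- Sound and complete intersective mixed semantics. -/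
def IsIMS {L V W Λ : Type*} (Cons : Set L → Set L → Prop)
    (interp : L → W → V) (Dp Dc : Λ → Set V) : Prop :=
  ∀ Γ Δ : Set L, Cons Γ Δ ↔
    ∀ (w : W) (l : Λ), Mixed (Dp l) (Dc l)
      ((fun F => interp F w) '' Γ) ((fun F => interp F w) '' Δ)

/-- Sound and complete mixed semantics (single pair). -/
def IsMixedSem {L V W : Type*} (Cons : Set L → Set L → Prop)
    (interp : L → W → V) (Dp Dc : Set V) : Prop :=
  ∀ Γ Δ : Set L, Cons Γ Δ ↔
    ∀ w : W, Mixed Dp Dc ((fun F => interp F w) '' Γ) ((fun F => interp F w) '' Δ)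

/-- Formulae of a sentential language. -/
inductive Formula (A : Type u) (C : Type u) (ar : C → ℕ) : Type u
  | atom : A → Formula A C ar
  | conn : (c : C) → (Fin (ar c) → Formula A C ar) → Formula A C ar

/-- Substitution induced by a map from atoms to formulae. -/
def Formula.subst {A C : Type u} {ar : C → ℕ} (σ : A → Formula A C ar) :
    Formula A C ar → Formula A C ar
  | .atom a => σ a
  | .conn c Fs => .conn c (fun i => (Fs i).subst σ)

def SubstInvariant {A C : Type u} {ar : C → ℕ}
    (Cons : Set (Formula A C ar) → Set (Formula A C ar) → Prop) : Prop :=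
  ∀ (σ : A → Formula A C ar) (Γ Δ : Set (Formula A C ar)),
    Cons Γ Δ → Cons (Formula.subst σ '' Γ) (Formula.subst σ '' Δ)

/-- Evaluation of formulae from truth-functions and a valuation. -/
def evalF {A C : Type u} {ar : C → ℕ} {V : Type v}
    (tf : (c : C) → (Fin (ar c) → V) → V) (v : A → V) : Formula A C ar → V
  | .atom a => v a
  | .conn c Fs => tf c (fun i => evalF tf v (Fs i))

/-- Truth-functionality of an interpretation w.r.t. truth-functions. -/
def Compositional {A C : Type u} {ar : C → ℕ} {V : Type v} {W : Type w}
    (interp : Formula A C ar → W → V)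
    (tf : (c : C) → (Fin (ar c) → V) → V) : Prop :=
  ∀ (c : C) (Fs : Fin (ar c) → Formula A C ar) (w : W),
    interp (Formula.conn c Fs) w = tf c (fun i => interp (Fs i) w)

/-- Regular connectives. -/
def RegularRel {A C : Type u} {ar : C → ℕ}
    (Cons : Set (Formula A C ar) → Set (Formula A C ar) → Prop) : Prop :=
  ∀ c : C, ∃ Bp Bc : Set (Set (Fin (ar c)) × Set (Fin (ar c))),
    ∀ (Γ Δ : Set (Formula A C ar)) (Fs : Fin (ar c) → Formula A C ar),
      (Cons (Γ ∪ {Formula.conn c Fs}) Δ ↔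
        ∀ B ∈ Bp, Cons (Γ ∪ Fs '' B.1) (Fs '' B.2 ∪ Δ)) ∧
      (Cons Γ ({Formula.conn c Fs} ∪ Δ) ↔
        ∀ B ∈ Bc, Cons (Γ ∪ Fs '' B.1) (Fs '' B.2 ∪ Δ))

/-!
A mixed truth-relation is monotone in both arguments, and so is any intersection of such
relations; hence every relation with an intersective mixed semantics is monotonic.
Conversely, for a monotonic `⊢` take as worlds the counterexamples `Γ' ⊬ Δ'` and give `F` at
`(Γ', Δ')` the pair of truth values `(F ∈ Γ', F ∉ Δ')`, designating the first component for
premises and the second for conclusions. Then `Γ, Δ` is refuted at `(Γ', Δ')` exactly when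
`Γ ⊆ Γ'` and `Δ ⊆ Δ'`, which by monotonicity is impossible if `Γ ⊢ Δ`, and which happens at the
world `(Γ, Δ)` itself if `Γ ⊬ Δ`.
-/

theorem Mixed.mono {V : Type*} {Dp Dc γ γ' δ δ' : Set V} (h : Mixed Dp Dc γ δ)
    (hγ : γ ⊆ γ') (hδ : δ ⊆ δ') : Mixed Dp Dc γ' δ' :=
  fun hγ' => (h (hγ.trans hγ')).mono (Set.inter_subset_inter_left _ hδ)

theorem IsIMS.monotonic {L V W Λ : Type*} {Cons : Set L → Set L → Prop}
    {interp : L → W → V} {Dp Dc : Λ → Set V} (hs : IsIMS Cons interp Dp Dc) :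
    Monotonic Cons := by
  intro Γ₁ Γ₂ Δ₁ Δ₂ hΓ hΔ hcons
  rw [hs] at hcons ⊢
  exact fun w l => (hcons w l).mono (Set.image_mono hΓ) (Set.image_mono hΔ)

section Canonical

variable {L : Type u} (Cons : Set L → Set L → Prop)

def CounterModel : Type u := {p : Set L × Set L // ¬ Cons p.1 p.2}

def canonicalInterp (F : L) (w : CounterModel Cons) : ULift.{u} (Prop × Prop) :=
  ⟨(F ∈ w.1.1, F ∉ w.1.2)⟩

variable {Cons}

theorem mixed_canonicalInterp_iff (w : CounterModel Cons) (Γ Δ : Set L) :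
    Mixed {v | v.down.1} {v | v.down.2}
      ((canonicalInterp Cons · w) '' Γ) ((canonicalInterp Cons · w) '' Δ) ↔
      (Γ ⊆ w.1.1 → ¬ Δ ⊆ w.1.2) := by
  simp [Mixed, canonicalInterp, Set.subset_def, Set.Nonempty]

theorem Monotonic.isIMS_canonicalInterp (hmono : Monotonic Cons) :
    IsIMS Cons (canonicalInterp Cons) (fun _ : PUnit.{u + 1} => {v | v.down.1})
      (fun _ => {v | v.down.2}) := by
  intro Γ Δ
  simp only [mixed_canonicalInterp_iff, forall_const]
  constructor
  · exact fun hcons w hΓ hΔ => w.2 (hmono hΓ hΔ hcons)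
  · intro h
    by_contra hcons
    exact h ⟨(Γ, Δ), hcons⟩ subset_rfl subset_rfl

end Canonical

/-- monotonicity is equivalent to the existence of a sound and
complete intersective mixed semantics. -/
theorem statement_3 {L : Type u} (Cons : Set L → Set L → Prop) :
    Monotonic Cons ↔
      ∃ (V W Λ : Type u) (interp : L → W → V) (Dp Dc : Λ → Set V),
        IsIMS Cons interp Dp Dc :=
  ⟨fun hmono => ⟨_, _, _, _, _, _, hmono.isIMS_canonicalInterp⟩,
    fun ⟨_, _, _, _, _, _, hs⟩ => hs.monotonic⟩
end

section
/- A consequence relation ⊢ on a sentential language is substitution-invariant, monotonic and reflexive if and only if it has a strong intersective p-mixed semantics, i.e. a strong semantics whose truth-relation is the intersection of a family of mixed truth-relations |≡_{D_p^λ,D_c^λ} with D_p^λ ⊆ D_c^λ for every λ. -/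
universe u v w x

/-!
A strong semantics with an intersective truth-relation is substitution-invariant because
evaluating `σ`-instances under `v` is evaluating the originals under `v ∘ σ`, and it inherits
monotonicity and reflexivity from each mixed relation `|≡_{Dp,Dc}` with `Dp ⊆ Dc`.

Conversely, take the formulae themselves as truth values with the term-forming connectives as
truth-functions, so that valuations are substitutions, and index the family by the
non-consequences `Γ₀ ⊬ Δ₀`, putting `Dp = Γ₀` and `Dc = Δ₀ᶜ`. By monotonicity `Γ ⊢ Δ` holds iff
no non-consequence contains `(Γ, Δ)`; by reflexivity `Γ₀ ∩ Δ₀ = ∅`, i.e. `Dp ⊆ Dc`; and by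
substitution-invariance it suffices to test `Γ ⊢ Δ` on all substitution instances.
-/

section Mixed

variable {V : Type*} {Dp Dc : Set V}

theorem monotonic_mixed : Monotonic (Mixed Dp Dc) := by
  intro γ₁ γ₂ δ₁ δ₂ hγ hδ h hγ₂
  obtain ⟨x, hxδ, hxD⟩ := h (hγ.trans hγ₂)
  exact ⟨x, hδ hxδ, hxD⟩

theorem reflRel_mixed (h : Dp ⊆ Dc) : ReflRel (Mixed Dp Dc) :=
  fun x hx => ⟨x, rfl, h (hx rfl)⟩

end Mixed

section Relations

variable {L ι : Type*}

theorem monotonic_forall {R : ι → Set L → Set L → Prop} (h : ∀ i, Monotonic (R i)) :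
    Monotonic fun Γ Δ => ∀ i, R i Γ Δ :=
  fun _ _ _ _ hΓ hΔ hR i => h i hΓ hΔ (hR i)

theorem reflRel_forall {R : ι → Set L → Set L → Prop} (h : ∀ i, ReflRel (R i)) :
    ReflRel fun Γ Δ => ∀ i, R i Γ Δ :=
  fun F i => h i F

theorem Monotonic.iff_forall_mixed {Cons : Set L → Set L → Prop} (hmono : Monotonic Cons)
    (Γ Δ : Set L) :
    Cons Γ Δ ↔ ∀ p : {p : Set L × Set L // ¬ Cons p.1 p.2}, Mixed p.1.1 p.1.2ᶜ Γ Δ := by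
  refine ⟨fun h p hΓ => ?_, fun h => ?_⟩
  · by_contra hempty
    have hΔ : Δ ⊆ p.1.2 := fun x hx => by_contra fun hx' => hempty ⟨x, hx, hx'⟩
    exact p.2 (hmono hΓ hΔ h)
  · by_contra hn
    obtain ⟨x, hxΔ, hxΔ'⟩ := h ⟨(Γ, Δ), hn⟩ subset_rfl
    exact hxΔ' hxΔ

theorem ReflRel.subset_compl_of_not {Cons : Set L → Set L → Prop} (hmono : Monotonic Cons)
    (hrefl : ReflRel Cons) {Γ Δ : Set L} (hn : ¬ Cons Γ Δ) : Γ ⊆ Δᶜ := fun x hxΓ hxΔ =>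
  hn (hmono (Set.singleton_subset_iff.mpr hxΓ) (Set.singleton_subset_iff.mpr hxΔ) (hrefl x))

end Relations

namespace Formula

variable {A C : Type u} {ar : C → ℕ}

@[simp]
theorem subst_atom (F : Formula A C ar) : F.subst atom = F := by
  induction F with
  | atom a => rfl
  | conn c Fs ih => exact congrArg (conn c) (funext ih)

theorem evalF_conn_eq_subst (σ : A → Formula A C ar) (F : Formula A C ar) :
    evalF (fun c Fs => conn c Fs) σ F = F.subst σ := by
  induction F with
  | atom a => rfl
  | conn c Fs ih => exact congrArg (conn c) (funext ih)

theorem evalF_subst {V : Type v} (tf : (c : C) → (Fin (ar c) → V) → V) (v : A → V)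
    (σ : A → Formula A C ar) (F : Formula A C ar) :
    evalF tf v (F.subst σ) = evalF tf (fun a => evalF tf v (σ a)) F := by
  induction F with
  | atom a => rfl
  | conn c Fs ih => exact congrArg (tf c) (funext ih)

end Formula

open Formula

section Semantics

variable {A C : Type u} {ar : C → ℕ} {V : Type v}

def semConsequence (tf : (c : C) → (Fin (ar c) → V) → V) (R : Set V → Set V → Prop)
    (Γ Δ : Set (Formula A C ar)) : Prop :=
  ∀ v : A → V, R (evalF tf v '' Γ) (evalF tf v '' Δ)

variable (tf : (c : C) → (Fin (ar c) → V) → V) {R : Set V → Set V → Prop}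

theorem substInvariant_semConsequence : SubstInvariant (semConsequence (A := A) tf R) := by
  intro σ Γ Δ h v
  simpa only [Set.image_image, evalF_subst] using h fun a => evalF tf v (σ a)

theorem monotonic_semConsequence (hR : Monotonic R) :
    Monotonic (semConsequence (A := A) tf R) :=
  fun _ _ _ _ hΓ hΔ h v => hR (Set.image_mono hΓ) (Set.image_mono hΔ) (h v)

theorem reflRel_semConsequence (hR : ReflRel R) :
    ReflRel (semConsequence (A := A) tf R) := by
  intro F v
  simpa only [Set.image_singleton] using hR (evalF tf v F)

end Semantics

theorem SubstInvariant.iff_forall_subst {A C : Type u} {ar : C → ℕ}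
    {Cons : Set (Formula A C ar) → Set (Formula A C ar) → Prop} (hsub : SubstInvariant Cons)
    (Γ Δ : Set (Formula A C ar)) :
    Cons Γ Δ ↔ ∀ σ : A → Formula A C ar, Cons (subst σ '' Γ) (subst σ '' Δ) :=
  ⟨fun h σ => hsub σ Γ Δ h, fun h => by simpa using h atom⟩

/-- substitution-invariance + monotonicity + reflexivity is
equivalent to the existence of a strong intersective p-mixed semantics. -/
theorem statement_4 {A C : Type u} (ar : C → ℕ)
    (Cons : Set (Formula A C ar) → Set (Formula A C ar) → Prop) :
    (SubstInvariant Cons ∧ Monotonic Cons ∧ ReflRel Cons) ↔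
      ∃ (V : Type u) (tf : (c : C) → (Fin (ar c) → V) → V)
        (Λ : Type u) (Dp Dc : Λ → Set V),
        (∀ l : Λ, Dp l ⊆ Dc l) ∧
        ∀ Γ Δ : Set (Formula A C ar), Cons Γ Δ ↔
          ∀ (v : A → V) (l : Λ),
            Mixed (Dp l) (Dc l)
              ((fun F => evalF tf v F) '' Γ) ((fun F => evalF tf v F) '' Δ) := by
  constructor
  · rintro ⟨hsub, hmono, hrefl⟩
    refine ⟨Formula A C ar, fun c Fs => conn c Fs,
      {p : Set (Formula A C ar) × Set (Formula A C ar) // ¬ Cons p.1 p.2}, fun p => p.1.1,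
      fun p => p.1.2ᶜ, fun p => hrefl.subset_compl_of_not hmono p.2, fun Γ Δ => ?_⟩
    simp only [evalF_conn_eq_subst]
    exact (hsub.iff_forall_subst Γ Δ).trans (forall_congr' fun σ => hmono.iff_forall_mixed _ _)
  · rintro ⟨V, tf, Λ, Dp, Dc, hDpc, hsem⟩
    obtain rfl : Cons = semConsequence tf fun γ δ => ∀ l, Mixed (Dp l) (Dc l) γ δ :=
      funext₂ fun Γ Δ => propext (hsem Γ Δ)
    exact ⟨substInvariant_semConsequence tf,
      monotonic_semConsequence tf (monotonic_forall fun _ => monotonic_mixed),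
      reflRel_semConsequence tf (reflRel_forall fun l => reflRel_mixed (hDpc l))⟩
end

section
/- A consequence relation ⊢ on a set L is monotonic and reflexive if and only if it has a sound and complete intersective p-mixed semantics, i.e. a sound and complete intersective mixed semantics with D_p^λ ⊆ D_c^λ for every λ. -/
/-!
Soundness of an intersective mixed semantics gives monotonicity directly, and reflexivity
once every `D_p` is contained in the corresponding `D_c`. Conversely, a monotonic reflexive
relation is characterised by its counterexamples: index the pairs of designated sets by the
pairs `(Γ₀, Δ₀)` with `Γ₀ ⊬ Δ₀`, take `D_p = Γ₀` and `D_c = Δ₀ᶜ`, a single world and each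
formula as its own truth value. Then `Γ ⊢ Δ` fails at the index `(Γ₀, Δ₀)` exactly when
`Γ ⊆ Γ₀` and `Δ ⊆ Δ₀`, which by monotonicity refutes `Γ ⊢ Δ`; and reflexivity says that
`Γ₀` and `Δ₀` are disjoint, i.e. `Γ₀ ⊆ Δ₀ᶜ`.
-/

universe u v w x

theorem mixed_compl_iff {V : Type*} {γ₀ δ₀ γ δ : Set V} :
    Mixed γ₀ δ₀ᶜ γ δ ↔ (γ ⊆ γ₀ → ¬ δ ⊆ δ₀) := by
  simp only [Mixed, Set.inter_compl_nonempty_iff]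

section Soundness

variable {L V W Λ : Type*} {Cons : Set L → Set L → Prop} {interp : L → W → V}
  {Dp Dc : Λ → Set V}

theorem IsIMS.monotonic_s5 (h : IsIMS Cons interp Dp Dc) : Monotonic Cons := by
  intro Γ₁ Γ₂ Δ₁ Δ₂ hΓ hΔ hCons
  rw [h] at hCons ⊢
  intro w l hsub
  obtain ⟨v, hvΔ, hvDc⟩ := hCons w l ((Set.image_mono hΓ).trans hsub)
  exact ⟨v, Set.image_mono hΔ hvΔ, hvDc⟩

theorem IsIMS.reflRel (h : IsIMS Cons interp Dp Dc) (hDpc : ∀ l, Dp l ⊆ Dc l) :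
    ReflRel Cons := by
  intro F
  rw [h]
  intro w l hsub
  have hF : interp F w ∈ (fun F => interp F w) '' {F} := Set.mem_image_of_mem _ rfl
  exact ⟨interp F w, hF, hDpc l (hsub hF)⟩

end Soundness

section Canonical

variable {L : Type*} (Cons : Set L → Set L → Prop)

def Counterexample : Type _ := {p : Set L × Set L // ¬ Cons p.1 p.2}

theorem counterexample_fst_subset_compl_snd (hrefl : ReflRel Cons) (hmono : Monotonic Cons)
    (p : Counterexample Cons) : p.1.1 ⊆ p.1.2ᶜ := fun F hFΓ hFΔ =>
  p.2 (hmono (Set.singleton_subset_iff.mpr hFΓ) (Set.singleton_subset_iff.mpr hFΔ) (hrefl F))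

theorem isIMS_counterexample (hmono : Monotonic Cons) :
    IsIMS Cons (fun F (_ : PUnit) => F)
      (fun p : Counterexample Cons => p.1.1) (fun p => p.1.2ᶜ) := by
  intro Γ Δ
  simp only [Set.image_id', mixed_compl_iff]
  constructor
  · rintro hCons _ ⟨⟨Γ₀, Δ₀⟩, hne⟩ hΓ hΔ
    exact hne (hmono hΓ hΔ hCons)
  · intro h
    by_contra hne
    exact h PUnit.unit ⟨(Γ, Δ), hne⟩ subset_rfl subset_rfl

end Canonical

/-- monotonicity + reflexivity is equivalent to the existence of a
sound and complete intersective p-mixed semantics. -/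
theorem statement_5 {L : Type u} (Cons : Set L → Set L → Prop) :
    (Monotonic Cons ∧ ReflRel Cons) ↔
      ∃ (V W Λ : Type u) (interp : L → W → V) (Dp Dc : Λ → Set V),
        (∀ l : Λ, Dp l ⊆ Dc l) ∧ IsIMS Cons interp Dp Dc := by
  constructor
  · rintro ⟨hmono, hrefl⟩
    exact ⟨L, PUnit, Counterexample Cons, _, _, _,
      counterexample_fst_subset_compl_snd Cons hrefl hmono, isIMS_counterexample Cons hmono⟩
  · rintro ⟨V, W, Λ, interp, Dp, Dc, hDpc, hims⟩
    exact ⟨hims.monotonic_s5, hims.reflRel hDpc⟩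
end
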